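/- In the Pontryagin setting ẏ = f(y, λ, t), if additionally the optimality condition ∂g/∂λ − p · (∂f/∂λ) = 0 holds along the trajectory, then the first variation δJ of the cost vanishes for every admissible variation δλ (with δy solving the linearized equation with δy(0)=0). -/

import Mathlib

/-!
Pairing the adjoint state `p` with the variation `δy`, the adjoint equation and the linearized
constraint give `d/dt (p ⬝ᵥ δy) = ∂g/∂y ⬝ᵥ δy + (p ᵥ* ∂f/∂λ) ⬝ᵥ δλ`, and the optimality condition
turns the last term into `∂g/∂λ ⬝ᵥ δλ`. Hence the integrand of `δJ` is an exact derivative and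
`δJ = p(T) ⬝ᵥ δy(T) - p(0) ⬝ᵥ δy(0) = 0` by `p(T) = 0` and `δy(0) = 0`.
-/

open MeasureTheory Matrix

theorem dotProduct_add_dotProduct_eq_of_adjoint {ι κ R : Type*} [Fintype ι] [Fintype κ]
    [CommRing R] (A : Matrix ι ι R) (B : Matrix ι κ R) {a p p' v v' : ι → R} {b w : κ → R}
    (hp' : p' = a - p ᵥ* A) (hv' : v' = A *ᵥ v + B *ᵥ w) (hb : b = p ᵥ* B) :
    p' ⬝ᵥ v + p ⬝ᵥ v' = a ⬝ᵥ v + b ⬝ᵥ w := by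
  subst hp' hv' hb
  simp only [sub_dotProduct, dotProduct_add, dotProduct_mulVec]
  ring

theorem hasDerivAt_dotProduct {ι : Type*} [Fintype ι] {p q : ℝ → ι → ℝ} {t : ℝ}
    (hp : DifferentiableAt ℝ p t) (hq : DifferentiableAt ℝ q t) :
    HasDerivAt (fun τ => p τ ⬝ᵥ q τ) (deriv p t ⬝ᵥ q t + p t ⬝ᵥ deriv q t) t := by
  have hpi : ∀ i, HasDerivAt (fun τ => p τ i) (deriv p t i) t := fun i =>
    hasDerivAt_pi.mp hp.hasDerivAt i
  have hqi : ∀ i, HasDerivAt (fun τ => q τ i) (deriv q t i) t := fun i =>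
    hasDerivAt_pi.mp hq.hasDerivAt i
  have hsum := HasDerivAt.fun_sum (u := Finset.univ) fun i _ => (hpi i).fun_mul (hqi i)
  simpa only [dotProduct, Finset.sum_add_distrib] using hsum

theorem integral_deriv_dotProduct {ι : Type*} [Fintype ι] {p q : ℝ → ι → ℝ}
    (hp : ContDiff ℝ 1 p) (hq : ContDiff ℝ 1 q) (a b : ℝ) :
    ∫ t in a..b, (deriv p t ⬝ᵥ q t + p t ⬝ᵥ deriv q t) = p b ⬝ᵥ q b - p a ⬝ᵥ q a := by
  have hp' := hp.continuous_deriv le_rfl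
  have hq' := hq.continuous_deriv le_rfl
  refine intervalIntegral.integral_eq_sub_of_hasDerivAt
    (fun t _ => hasDerivAt_dotProduct (hp.differentiable one_ne_zero t)
      (hq.differentiable one_ne_zero t)) (Continuous.intervalIntegrable ?_ a b)
  fun_prop

theorem pontryagin_optimality_stationary_general {d m : ℕ} (T : ℝ)
    (f : (Fin d → ℝ) → (Fin m → ℝ) → ℝ → Fin d → ℝ)
    (g : (Fin d → ℝ) → (Fin m → ℝ) → ℝ → ℝ)
    (y δy : ℝ → Fin d → ℝ) (lam δlam : ℝ → Fin m → ℝ) (p : ℝ → Fin d → ℝ)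
    (hδy : ContDiff ℝ 1 δy) (hp : ContDiff ℝ 1 p)
    -- adjoint equation and final condition
    (hadj : ∀ t i, deriv (fun τ => p τ i) t
        + ∑ j, p t j * fderiv ℝ (fun y' => f y' (lam t) t j) (y t) (Pi.single i 1)
        - fderiv ℝ (fun y' => g y' (lam t) t) (y t) (Pi.single i 1) = 0)
    (hfinal : p T = 0)
    -- linearized constraint
    (hlin : ∀ t i, deriv (fun τ => δy τ i) t
        = (∑ j, fderiv ℝ (fun y' => f y' (lam t) t i) (y t) (Pi.single j 1) * δy t j)
        + ∑ j, fderiv ℝ (fun l' => f (y t) l' t i) (lam t) (Pi.single j 1) * δlam t j)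
    (hlin0 : δy 0 = 0)
    -- Pontryagin optimality condition along the trajectory
    (hopt : ∀ t j, fderiv ℝ (fun l' => g (y t) l' t) (lam t) (Pi.single j 1)
        - ∑ i, p t i * fderiv ℝ (fun l' => f (y t) l' t i) (lam t) (Pi.single j 1) = 0) :
    (∫ t in (0:ℝ)..T,
      ((∑ i, fderiv ℝ (fun y' => g y' (lam t) t) (y t) (Pi.single i 1) * δy t i)
       + ∑ j, fderiv ℝ (fun l' => g (y t) l' t) (lam t) (Pi.single j 1) * δlam t j))
    = 0 := by
  have hderiv_p : ∀ t, deriv p t = fun i => deriv (fun τ => p τ i) t := fun t =>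
    deriv_pi fun i => (contDiff_pi.mp hp i).differentiable one_ne_zero t
  have hderiv_δy : ∀ t, deriv δy t = fun i => deriv (fun τ => δy τ i) t := fun t =>
    deriv_pi fun i => (contDiff_pi.mp hδy i).differentiable one_ne_zero t
  let A t : Matrix (Fin d) (Fin d) ℝ := .of fun i j =>
    fderiv ℝ (fun y' => f y' (lam t) t i) (y t) (Pi.single j 1)
  let B t : Matrix (Fin d) (Fin m) ℝ := .of fun i j =>
    fderiv ℝ (fun l' => f (y t) l' t i) (lam t) (Pi.single j 1)
  have hintegrand : ∀ t, deriv p t ⬝ᵥ δy t + p t ⬝ᵥ deriv δy t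
      = (∑ i, fderiv ℝ (fun y' => g y' (lam t) t) (y t) (Pi.single i 1) * δy t i)
        + ∑ j, fderiv ℝ (fun l' => g (y t) l' t) (lam t) (Pi.single j 1) * δlam t j := by
    intro t
    refine dotProduct_add_dotProduct_eq_of_adjoint (A t) (B t) ?_ ?_ ?_
    · rw [hderiv_p]
      exact funext fun i => eq_sub_of_add_eq (sub_eq_zero.mp (hadj t i))
    · rw [hderiv_δy]
      exact funext fun i => hlin t i
    · exact funext fun j => sub_eq_zero.mp (hopt t j)
  rw [← intervalIntegral.integral_congr fun t _ => hintegrand t,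
    integral_deriv_dotProduct hp hδy, hfinal, hlin0]
  simp

/-- If additionally the Pontryagin optimality condition `∂g/∂λ − p·(∂f/∂λ) = 0`
holds along the trajectory, then the first variation `δJ` of the cost vanishes
for every admissible variation. -/
theorem pontryagin_optimality_stationary {d m : ℕ} (T : ℝ) (hT : 0 < T)
    (f : (Fin d → ℝ) → (Fin m → ℝ) → ℝ → Fin d → ℝ)
    (g : (Fin d → ℝ) → (Fin m → ℝ) → ℝ → ℝ)
    (hf : ContDiff ℝ 1 fun z : (Fin d → ℝ) × (Fin m → ℝ) × ℝ => f z.1 z.2.1 z.2.2)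
    (hg : ContDiff ℝ 1 fun z : (Fin d → ℝ) × (Fin m → ℝ) × ℝ => g z.1 z.2.1 z.2.2)
    (x : Fin d → ℝ)
    (y δy : ℝ → Fin d → ℝ) (lam δlam : ℝ → Fin m → ℝ) (p : ℝ → Fin d → ℝ)
    (hy : ContDiff ℝ 1 y) (hδy : ContDiff ℝ 1 δy) (hlam : ContDiff ℝ 1 lam)
    (hδlam : ContDiff ℝ 1 δlam) (hp : ContDiff ℝ 1 p)
    -- state equation
    (hstate : ∀ t i, deriv (fun τ => y τ i) t = f (y t) (lam t) t i)
    (hinit : y 0 = x)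
    -- adjoint equation and final condition
    (hadj : ∀ t i, deriv (fun τ => p τ i) t
        + ∑ j, p t j * fderiv ℝ (fun y' => f y' (lam t) t j) (y t) (Pi.single i 1)
        - fderiv ℝ (fun y' => g y' (lam t) t) (y t) (Pi.single i 1) = 0)
    (hfinal : p T = 0)
    -- linearized constraint
    (hlin : ∀ t i, deriv (fun τ => δy τ i) t
        = (∑ j, fderiv ℝ (fun y' => f y' (lam t) t i) (y t) (Pi.single j 1) * δy t j)
        + ∑ j, fderiv ℝ (fun l' => f (y t) l' t i) (lam t) (Pi.single j 1) * δlam t j)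
    (hlin0 : δy 0 = 0)
    -- Pontryagin optimality condition along the trajectory
    (hopt : ∀ t j, fderiv ℝ (fun l' => g (y t) l' t) (lam t) (Pi.single j 1)
        - ∑ i, p t i * fderiv ℝ (fun l' => f (y t) l' t i) (lam t) (Pi.single j 1) = 0) :
    (∫ t in (0:ℝ)..T,
      ((∑ i, fderiv ℝ (fun y' => g y' (lam t) t) (y t) (Pi.single i 1) * δy t i)
       + ∑ j, fderiv ℝ (fun l' => g (y t) l' t) (lam t) (Pi.single j 1) * δlam t j))
    = 0 :=
  pontryagin_optimality_stationary_general T f g y δy lam δlam p hδy hp hadj hfinal hlin hlin0 hopt
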